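/- arXiv:1911.12992 — 2 statements merged into one kernel-verified Lean document; each statement's English description precedes it below -/
import Mathlib

section
/- For the adding machine T on the Cantor set, every point x whose code is eventually all 1's (i.e., x is a right endpoint of a construction interval) satisfies liminf_{n→∞} n^{1/β} |T^n(x) - x| = 1, where β = log_3(2). -/
/-!
Reading a code as the binary expansion of a 2-adic integer, the adding machine is `x ↦ x + 1`.
The codes that are eventually `1` are the two's complement codes `a.testBit` of the negative
integers `a`, so `T^[n] x` is the code of `a + n`. Write `n = 2^v c` with `c` odd: the codes of
`a` and `a + n` agree below digit `v` and differ at it, hence `|T^[n] x - x| ≥ 3^{-(v+1)}`, while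
`n^{1/β} = 3^v c^{1/β} ≥ 3^{v+1}` as soon as `c ≥ 3`. For `n = 2^v` with `v` large the two codes
continue with all `1`s and all `0`s from digit `v` on, so the distance is exactly `3^{-v}` and
`n^{1/β} |T^[n] x - x| = 1`.
-/

open MeasureTheory Filter
open scoped Classical

/-- The point of the middle-third Cantor set with ternary code `x`
(digit `true` ↦ 2, `false` ↦ 0): `x = Σ_{k≥1} 2 x_k / 3^k`. -/
noncomputable def cantorVal (x : ℕ → Bool) : ℝ :=
  ∑' k : ℕ, (if x k then 2 else 0) / 3 ^ (k + 1)

/-- The adding machine on codes: set the first digit equal to `false` (i.e. 0) to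
`true` (i.e. 1) and all earlier digits to `false`; `111... ↦ 000...`. -/
noncomputable def addingMachine (x : ℕ → Bool) : ℕ → Bool :=
  if h : ∃ n, x n = false then
    fun k => if k < Nat.find h then false else if k = Nat.find h then true else x k
  else fun _ => false

def seqCons (b : Bool) (s : ℕ → Bool) : ℕ → Bool
  | 0 => b
  | k + 1 => s k

namespace Int

theorem testBit_bit (b : Bool) (c : ℤ) : (bit b c).testBit = seqCons b c.testBit := by
  funext k
  cases k with
  | zero => exact testBit_bit_zero b c
  | succ k => exact testBit_bit_succ k b c

theorem testBit_negSucc (m k : ℕ) : testBit -[m+1] k = !m.testBit k := rfl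

theorem testBit_natCast (m k : ℕ) : testBit (m : ℤ) k = m.testBit k := rfl

theorem bit_add_two_pow_succ_mul (b : Bool) (d c : ℤ) (v : ℕ) :
    bit b d + 2 ^ (v + 1) * c = bit b (d + 2 ^ v * c) := by
  simp only [bit_val]; ring

theorem testBit_add_two_pow_mul_of_lt (a c : ℤ) {k v : ℕ} (hk : k < v) :
    (a + 2 ^ v * c).testBit k = a.testBit k := by
  induction v generalizing a k with
  | zero => omega
  | succ v ih =>
    rw [← bit_decomp a, bit_add_two_pow_succ_mul]
    cases k with
    | zero => simp only [testBit_bit_zero]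
    | succ k => simp only [testBit_bit_succ, ih _ (Nat.lt_of_succ_lt_succ hk)]

theorem testBit_add_two_pow_mul_odd (a : ℤ) {c : ℤ} (hc : Odd c) (v : ℕ) :
    (a + 2 ^ v * c).testBit v = !a.testBit v := by
  induction v generalizing a with
  | zero =>
    obtain ⟨q, rfl⟩ := hc
    rw [← bit_decomp a]
    cases bodd a
    · rw [show bit false (div2 a) + 2 ^ 0 * (2 * q + 1) = bit true (div2 a + q) by
        simp only [bit_val, cond_false, cond_true]; ring]
      simp only [testBit_bit_zero, Bool.not_false]
    · rw [show bit true (div2 a) + 2 ^ 0 * (2 * q + 1) = bit false (div2 a + q + 1) by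
        simp only [bit_val, cond_false, cond_true]; ring]
      simp only [testBit_bit_zero, Bool.not_true]
  | succ v ih =>
    rw [← bit_decomp a, bit_add_two_pow_succ_mul]
    simp only [testBit_bit_succ, ih]

theorem testBit_negSucc_add_two_pow {m v : ℕ} (hm : m < 2 ^ v) (k : ℕ) :
    (-[m+1] + 2 ^ v : ℤ).testBit k = (decide (k < v) && testBit -[m+1] k) := by
  rw [show (-[m+1] + 2 ^ v : ℤ) = ((2 ^ v - (m + 1) : ℕ) : ℤ) by
    rw [Nat.cast_sub hm, negSucc_eq]; push_cast; ring]
  rw [testBit_natCast, Nat.testBit_two_pow_sub_succ hm, testBit_negSucc]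

end Int

theorem addingMachine_seqCons_false (s : ℕ → Bool) :
    addingMachine (seqCons false s) = seqCons true s := by
  have h : ∃ n, seqCons false s n = false := ⟨0, rfl⟩
  rw [addingMachine, dif_pos h, (Nat.find_eq_zero h).2 rfl]
  funext k
  cases k <;> rfl

theorem addingMachine_seqCons_true (s : ℕ → Bool) :
    addingMachine (seqCons true s) = seqCons false (addingMachine s) := by
  by_cases hs : ∃ n, s n = false
  · have h : ∃ n, seqCons true s n = false := ⟨_ + 1, Nat.find_spec hs⟩
    rw [addingMachine, dif_pos h, addingMachine, dif_pos hs,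
      Nat.find_comp_succ h hs (by simp [seqCons])]
    funext k
    cases k <;> simp [seqCons]
  · have h : ¬ ∃ n, seqCons true s n = false := by
      rintro ⟨_ | n, hn⟩
      exacts [Bool.noConfusion hn, hs ⟨n, hn⟩]
    rw [addingMachine, dif_neg h, addingMachine, dif_neg hs]
    funext k
    cases k <;> rfl

theorem addingMachine_const_true : addingMachine (fun _ => true) = fun _ => false := by
  simp [addingMachine]

theorem addingMachine_testBit (a : ℤ) : addingMachine a.testBit = (a + 1).testBit := by
  obtain ⟨b, d, rfl⟩ : ∃ b d, a = Int.bit b d := ⟨_, _, (Int.bit_decomp a).symm⟩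
  cases b
  · rw [Int.testBit_bit, addingMachine_seqCons_false, ← Int.testBit_bit,
      show Int.bit false d + 1 = Int.bit true d by
        simp only [Int.bit_val, cond_false, cond_true]; ring]
  -- `-1 = bit true (-1)` is where the recursion on `natAbs` would not descend.
  · by_cases hd : d = -1
    · subst hd
      rw [show Int.bit true (-1) = -1 from rfl, neg_add_cancel]
      convert addingMachine_const_true
      · exact congrArg Bool.not (Nat.zero_testBit _)
      · exact Nat.zero_testBit _
    · rw [Int.testBit_bit, addingMachine_seqCons_true, addingMachine_testBit d, ← Int.testBit_bit,
        show Int.bit true d + 1 = Int.bit false (d + 1) by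
          simp only [Int.bit_val, cond_false, cond_true]; ring]
termination_by a.natAbs
decreasing_by subst_vars; simp only [Int.bit_val, cond_true]; omega

theorem iterate_addingMachine_testBit (a : ℤ) (n : ℕ) :
    addingMachine^[n] a.testBit = (a + n).testBit := by
  induction n with
  | zero => simp
  | succ n ih =>
    rw [Function.iterate_succ_apply', ih, addingMachine_testBit]
    push_cast
    ring_nf

theorem exists_eq_testBit_negSucc {x : ℕ → Bool} {N : ℕ} (hx : ∀ k, N ≤ k → x k = true) :
    ∃ m < 2 ^ N, x = (Int.negSucc m).testBit := by
  refine ⟨Nat.ofBits fun i : Fin N => !x i, Nat.ofBits_lt_two_pow _, funext fun k => ?_⟩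
  rw [Int.testBit_negSucc, Nat.testBit_ofBits]
  split_ifs with hk
  · simp
  · simp [hx k (not_lt.1 hk)]

theorem summable_cantorVal (y : ℕ → Bool) :
    Summable fun k => (if y k then 2 else 0 : ℝ) / 3 ^ (k + 1) := by
  refine (summable_geometric_of_lt_one (by norm_num) (by norm_num : (1 / 3 : ℝ) < 1))
    |>.of_nonneg_of_le (fun k => by positivity) fun k => ?_
  rw [one_div_pow, pow_succ]
  split_ifs <;> field_simp <;> norm_num

theorem cantorVal_const_true : cantorVal (fun _ => true) = 1 := by
  have h : ∀ k : ℕ, (2 : ℝ) / 3 ^ (k + 1) = 2 / 3 * (1 / 3) ^ k := fun k => by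
    rw [one_div_pow, pow_succ]; field_simp
  simp only [cantorVal, if_true, h, tsum_mul_left,
    tsum_geometric_of_lt_one (by norm_num : (0 : ℝ) ≤ 1 / 3) (by norm_num)]
  norm_num

theorem cantorVal_const_false : cantorVal (fun _ => false) = 0 := by
  simp [cantorVal]

theorem cantorVal_nonneg (y : ℕ → Bool) : 0 ≤ cantorVal y :=
  tsum_nonneg fun _ => by positivity

theorem cantorVal_le_one (y : ℕ → Bool) : cantorVal y ≤ 1 := by
  rw [← cantorVal_const_true]
  refine (summable_cantorVal y).tsum_le_tsum (fun k => ?_) (summable_cantorVal _)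
  gcongr
  split <;> norm_num

theorem cantorVal_eq_sum_add (y : ℕ → Bool) (v : ℕ) :
    cantorVal y = ∑ k ∈ Finset.range v, (if y k then 2 else 0 : ℝ) / 3 ^ (k + 1) +
      cantorVal (fun k => y (k + v)) / 3 ^ v := by
  rw [cantorVal, ← (summable_cantorVal y).sum_add_tsum_nat_add v, cantorVal, ← tsum_div_const]
  congr 2 with k
  rw [div_div, ← pow_add]
  ring_nf

theorem two_thirds_le_cantorVal {y : ℕ → Bool} (hy : y 0 = true) : 2 / 3 ≤ cantorVal y := by
  rw [cantorVal_eq_sum_add y 1]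
  simp only [Finset.sum_range_one, hy, if_true]
  have := cantorVal_nonneg (fun k => y (k + 1))
  norm_num
  positivity

theorem cantorVal_le_one_third {y : ℕ → Bool} (hy : y 0 = false) : cantorVal y ≤ 1 / 3 := by
  rw [cantorVal_eq_sum_add y 1]
  simp only [Finset.sum_range_one, hy]
  have := cantorVal_le_one (fun k => y (k + 1))
  norm_num
  linarith

theorem one_third_le_abs_cantorVal_sub {y z : ℕ → Bool} (h : y 0 ≠ z 0) :
    1 / 3 ≤ |cantorVal y - cantorVal z| := by
  cases hy : y 0 <;> cases hz : z 0 <;> rw [hy, hz] at h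
  · exact absurd rfl h
  · rw [abs_sub_comm, le_abs]
    left; linarith [cantorVal_le_one_third hy, two_thirds_le_cantorVal hz]
  · rw [le_abs]
    left; linarith [two_thirds_le_cantorVal hy, cantorVal_le_one_third hz]
  · exact absurd rfl h

theorem cantorVal_sub_of_eq_of_lt {y z : ℕ → Bool} {v : ℕ} (hyz : ∀ k < v, y k = z k) :
    cantorVal y - cantorVal z =
      (cantorVal (fun k => y (k + v)) - cantorVal (fun k => z (k + v))) / 3 ^ v := by
  rw [cantorVal_eq_sum_add y v, cantorVal_eq_sum_add z v,
    Finset.sum_congr rfl fun k hk => by rw [hyz k (Finset.mem_range.1 hk)]]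
  ring

theorem inv_three_pow_succ_le_abs_cantorVal_sub {y z : ℕ → Bool} {v : ℕ}
    (hyz : ∀ k < v, y k = z k) (hv : y v ≠ z v) :
    ((3 : ℝ) ^ (v + 1))⁻¹ ≤ |cantorVal y - cantorVal z| := by
  calc ((3 : ℝ) ^ (v + 1))⁻¹ = 1 / 3 / 3 ^ v := by rw [pow_succ']; field_simp
    _ ≤ |cantorVal (fun k => y (k + v)) - cantorVal (fun k => z (k + v))| / 3 ^ v := by
      gcongr
      exact one_third_le_abs_cantorVal_sub (by simpa using hv)
    _ = |cantorVal y - cantorVal z| := by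
      rw [cantorVal_sub_of_eq_of_lt hyz, abs_div, abs_of_pos (by positivity : (0 : ℝ) < 3 ^ v)]

theorem Filter.liminf_eq_of_eventually_ge_of_frequently_le {ι α : Type*}
    [ConditionallyCompleteLinearOrder α] {f : Filter ι} {u : ι → α} {a : α}
    (hge : ∀ᶠ i in f, a ≤ u i) (hle : ∃ᶠ i in f, u i ≤ a) : liminf u f = a :=
  le_antisymm (liminf_le_of_frequently_le hle (isBoundedUnder_of_eventually_ge hge))
    (le_liminf_of_le (IsCoboundedUnder.of_frequently_le hle) hge)

theorem two_pow_rpow_inv_logb_three_two (v : ℕ) :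
    ((2 : ℝ) ^ v) ^ (1 / Real.logb 3 2) = 3 ^ v := by
  rw [← Real.rpow_pow_comm (by norm_num), one_div, Real.inv_logb,
    Real.rpow_logb (by norm_num) (by norm_num) (by norm_num)]

theorem self_le_rpow_inv_logb_three_two {c : ℝ} (hc : 1 ≤ c) : c ≤ c ^ (1 / Real.logb 3 2) := by
  refine Real.self_le_rpow_of_one_le hc ?_
  rw [one_div, Real.inv_logb, Real.le_logb_iff_rpow_le (by norm_num) (by norm_num)]
  norm_num

theorem cantorVal_negSucc_sub_add_two_pow {m v : ℕ} (hm : m < 2 ^ v) :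
    cantorVal (Int.negSucc m).testBit - cantorVal (Int.negSucc m + 2 ^ v).testBit =
      (3 ^ v)⁻¹ := by
  have hlow : ∀ k < v, (Int.negSucc m).testBit k = (Int.negSucc m + 2 ^ v).testBit k :=
    fun k hk => by rw [Int.testBit_negSucc_add_two_pow hm, decide_eq_true hk, Bool.true_and]
  have htrue : (fun k => (Int.negSucc m).testBit (k + v)) = fun _ => true := funext fun k => by
    rw [Int.testBit_negSucc, Nat.testBit_lt_two_pow (hm.trans_le (Nat.pow_le_pow_right two_pos
      (Nat.le_add_left v k)))]
    rfl
  have hfalse : (fun k => (Int.negSucc m + 2 ^ v).testBit (k + v)) = fun _ => false :=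
    funext fun k => by
      rw [Int.testBit_negSucc_add_two_pow hm, decide_eq_false (by omega), Bool.false_and]
  rw [cantorVal_sub_of_eq_of_lt hlow, htrue, hfalse, cantorVal_const_true, cantorVal_const_false,
    sub_zero, one_div]

theorem rpow_mul_abs_cantorVal_negSucc_add_two_pow {m v : ℕ} (hm : m < 2 ^ v) :
    ((2 ^ v : ℕ) : ℝ) ^ (1 / Real.logb 3 2) *
      |cantorVal (Int.negSucc m + (2 ^ v : ℕ)).testBit - cantorVal (Int.negSucc m).testBit| =
      1 := by
  push_cast
  rw [abs_sub_comm, cantorVal_negSucc_sub_add_two_pow hm, abs_of_pos (by positivity),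
    two_pow_rpow_inv_logb_three_two, mul_inv_cancel₀ (by positivity)]

theorem one_le_rpow_mul_abs_cantorVal_add (a : ℤ) {v c : ℕ} (hc : Odd c) (hc3 : 3 ≤ c) :
    1 ≤ ((2 ^ v * c : ℕ) : ℝ) ^ (1 / Real.logb 3 2) *
      |cantorVal (a + (2 ^ v * c : ℕ)).testBit - cantorVal a.testBit| := by
  have hdist : ((3 : ℝ) ^ (v + 1))⁻¹ ≤
      |cantorVal (a + (2 ^ v * c : ℕ)).testBit - cantorVal a.testBit| := by
    push_cast
    refine inv_three_pow_succ_le_abs_cantorVal_sub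
      (fun k hk => Int.testBit_add_two_pow_mul_of_lt a c hk) ?_
    rw [Int.testBit_add_two_pow_mul_odd a hc.natCast]
    exact Bool.not_ne_self _
  have hscale : (3 : ℝ) ^ (v + 1) ≤ ((2 ^ v * c : ℕ) : ℝ) ^ (1 / Real.logb 3 2) := by
    have hc3' : (3 : ℝ) ≤ c := by exact_mod_cast hc3
    push_cast
    rw [Real.mul_rpow (by positivity) (by positivity), two_pow_rpow_inv_logb_three_two, pow_succ]
    gcongr
    exact hc3'.trans (self_le_rpow_inv_logb_three_two (by linarith))
  calc (1 : ℝ) = 3 ^ (v + 1) * ((3 : ℝ) ^ (v + 1))⁻¹ := (mul_inv_cancel₀ (by positivity)).symm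
    _ ≤ _ := by gcongr

theorem stmt_14 (x : ℕ → Bool) (hx : ∃ N : ℕ, ∀ k, N ≤ k → x k = true) :
    liminf (fun n : ℕ =>
        (n : ℝ) ^ (1 / Real.logb 3 2) *
          |cantorVal (addingMachine^[n] x) - cantorVal x|) atTop = 1 := by
  obtain ⟨N, hN⟩ := hx
  obtain ⟨m, hm, rfl⟩ := exists_eq_testBit_negSucc hN
  simp only [iterate_addingMachine_testBit]
  refine liminf_eq_of_eventually_ge_of_frequently_le ?_ ?_
  · filter_upwards [eventually_ge_atTop (2 ^ N)] with n hn
    obtain ⟨v, c, hc, rfl⟩ :=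
      Nat.exists_eq_two_pow_mul_odd (n := n) (by have := Nat.one_le_two_pow (n := N); omega)
    obtain rfl | hc3 : c = 1 ∨ 3 ≤ c := by obtain ⟨q, rfl⟩ := hc; omega
    · rw [mul_one] at hn ⊢
      exact (rpow_mul_abs_cantorVal_negSucc_add_two_pow (hm.trans_le hn)).ge
    · exact one_le_rpow_mul_abs_cantorVal_add _ hc hc3
  · refine frequently_atTop.2 fun K => ⟨2 ^ max N K, ?_, ?_⟩
    · exact (le_max_right N K).trans Nat.lt_two_pow_self.le
    · exact (rpow_mul_abs_cantorVal_negSucc_add_two_pow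
        (hm.trans_le (Nat.pow_le_pow_right two_pos (le_max_left N K)))).le
end

section
/- If H_β(X) = 0 for some β > 0, then for μ-almost every x, liminf_{n→∞} n^{1/β} d(T^n(x), x) = 0. -/
/-!
Quantitative Poincaré recurrence: the points of a measurable set `A` that do not come back to `A`
within `N` steps form a set whose first `N + 1` preimages are pairwise disjoint, so it has measure
at most `1 / (N + 1)`. A point `x ∈ A` with `k * d(Tᵏ x, x) ^ β > ε` for all `k ≥ 1` cannot
return to `A` before time `N ≈ ε / (diam A) ^ β`, hence such points of `A` have measure
`≲ (diam A) ^ β / ε`.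
Summing over countable covers with `∑ (diam Aᵢ) ^ β` arbitrarily small, which exist because
`μH[β] X = 0`, shows that these points form a null set. Applying this to `T^[m + 1]` yields close
returns at times `≥ m`, and hence the `liminf`.
-/

open MeasureTheory Filter Set Metric
open scoped ENNReal

theorem ENNReal.mul_le_of_forall_natCast_mul_le {a b m : ℝ≥0∞}
    (h : ∀ N : ℕ, N * a ≤ b → (N + 1) * m ≤ 1) : b * m ≤ a := by
  by_contra! hlt
  have hm : m ≠ 0 := by rintro rfl; simp at hlt
  have hex : ∃ n : ℕ, 1 < n * m := ENNReal.exists_nat_mul_gt hm one_ne_top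
  -- `N + 1` is the least `n` with `1 < n * m`
  obtain ⟨N, hN⟩ : ∃ N : ℕ, N + 1 = Nat.find hex := ⟨Nat.find hex - 1, by
    have : Nat.find hex ≠ 0 := fun h0 => by simpa [h0] using Nat.find_spec hex
    omega⟩
  have hNm : N * m ≤ 1 := not_lt.1 (Nat.find_min hex (by omega))
  have hN1 : 1 < (N + 1) * m := by exact_mod_cast hN ▸ Nat.find_spec hex
  refine hN1.not_ge (h N ?_)
  calc (N : ℝ≥0∞) * a ≤ N * (b * m) := by gcongr
    _ = b * (N * m) := by ring
    _ ≤ b * 1 := by gcongr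
    _ = b := mul_one b

theorem Filter.liminf_eq_zero_of_frequently_le {ι : Type*} {l : Filter ι} {a : ι → ℝ}
    (h0 : ∀ i, 0 ≤ a i) (h : ∀ ε > 0, ∃ᶠ i in l, a i ≤ ε) : liminf a l = 0 := by
  refine le_antisymm (le_of_forall_pos_le_add fun ε hε => ?_) ?_
  · rw [zero_add]
    exact liminf_le_of_frequently_le (h ε hε) ⟨0, eventually_map.2 (Eventually.of_forall h0)⟩
  · exact le_liminf_of_le (IsCoboundedUnder.of_frequently_le (h 1 one_pos))
      (Eventually.of_forall h0)

theorem exists_isClosed_cover_tsum_ediam_rpow_lt {X : Type*} [EMetricSpace X] [MeasurableSpace X]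
    [BorelSpace X] {β : ℝ} (hβ : 0 < β) {s : Set X} (h0 : μH[β] s = 0) {η : ℝ≥0∞} (hη : η ≠ 0) :
    ∃ t : ℕ → Set X, (∀ n, IsClosed (t n)) ∧ s ⊆ ⋃ n, t n ∧ ∑' n, ediam (t n) ^ β < η := by
  have hinf : (⨅ (t : ℕ → Set X) (_ : s ⊆ ⋃ n, t n) (_ : ∀ n, ediam (t n) ≤ ⊤),
      ∑' n, ⨆ _ : (t n).Nonempty, ediam (t n) ^ β) < η := by
    refine lt_of_le_of_lt ?_ (h0 ▸ pos_iff_ne_zero.2 hη)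
    rw [Measure.hausdorffMeasure_apply]
    exact le_iSup₂_of_le (f := fun (r : ℝ≥0∞) (_ : 0 < r) => ⨅ (t : ℕ → Set X)
      (_ : s ⊆ ⋃ n, t n) (_ : ∀ n, ediam (t n) ≤ r),
      ∑' n, ⨆ _ : (t n).Nonempty, ediam (t n) ^ β) ⊤ ENNReal.zero_lt_top le_rfl
  simp only [iInf_lt_iff] at hinf
  obtain ⟨t, hcov, -, hsum⟩ := hinf
  have hguard : ∀ n, (⨆ _ : (t n).Nonempty, ediam (t n) ^ β) = ediam (t n) ^ β := by
    intro n
    rcases (t n).eq_empty_or_nonempty with hn | hn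
    · simp [hn, ENNReal.zero_rpow_of_pos hβ]
    · exact ciSup_pos hn
  refine ⟨fun n => closure (t n), fun n => isClosed_closure,
    hcov.trans (iUnion_mono fun n => subset_closure), ?_⟩
  simpa only [ediam_closure, hguard] using hsum

/-- `k * d ^ β ≤ ε` is `k ^ (1 / β) * d ≤ ε ^ (1 / β)`; in this form the estimates stay in
`ℝ≥0∞`. -/
def slowReturnSet {X : Type*} [PseudoEMetricSpace X] (S : X → X) (β : ℝ) (ε : ℝ≥0∞) : Set X :=
  {x | ∀ k : ℕ, 1 ≤ k → ε < (k : ℝ≥0∞) * edist (S^[k] x) x ^ β}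

namespace MeasureTheory.MeasurePreserving

variable {X : Type*} [MeasurableSpace X] {S : X → X} {μ : Measure X}

theorem natCast_add_one_mul_measure_diff_biUnion_le (hS : MeasurePreserving S μ μ)
    {s : Set X} (hs : MeasurableSet s) (N : ℕ) :
    ((N : ℝ≥0∞) + 1) * μ (s \ ⋃ k ∈ Finset.Icc 1 N, S^[k] ⁻¹' s) ≤ μ univ := by
  set E := s \ ⋃ k ∈ Finset.Icc 1 N, S^[k] ⁻¹' s
  have hE : MeasurableSet E :=
    hs.diff (Finset.measurableSet_biUnion _ fun k _ => hS.measurable.iterate k hs)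
  -- a point of `S^[i] ⁻¹' E ∩ S^[j] ⁻¹' E` would return from `S^[i] x ∈ E` to `s` after
  -- `j - i` steps
  have hdisj_lt : ∀ i j, i < j → j ≤ N → Disjoint (S^[i] ⁻¹' E) (S^[j] ⁻¹' E) := by
    refine fun i j hij hjN => disjoint_left.2 fun x hi hj => hi.2 ?_
    refine mem_biUnion (x := j - i) (Finset.mem_Icc.2 ⟨by omega, by omega⟩) ?_
    rw [mem_preimage, ← Function.iterate_add_apply, Nat.sub_add_cancel hij.le]
    exact hj.1
  have hdisj : PairwiseDisjoint (Finset.range (N + 1) : Set ℕ) (fun i => S^[i] ⁻¹' E) := by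
    intro i hi j hj hij
    simp only [Finset.coe_range, mem_Iio] at hi hj
    rcases hij.lt_or_gt with h | h
    exacts [hdisj_lt i j h (by omega), (hdisj_lt j i h (by omega)).symm]
  calc ((N : ℝ≥0∞) + 1) * μ E = ∑ i ∈ Finset.range (N + 1), μ (S^[i] ⁻¹' E) := by
        simp [(hS.iterate _).measure_preimage hE.nullMeasurableSet]
    _ = μ (⋃ i ∈ Finset.range (N + 1), S^[i] ⁻¹' E) :=
        (measure_biUnion_finset hdisj fun i _ => hS.measurable.iterate i hE).symm
    _ ≤ μ univ := measure_mono (subset_univ _)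

theorem mul_measure_slowReturnSet_inter_le [PseudoEMetricSpace X] [IsProbabilityMeasure μ]
    (hS : MeasurePreserving S μ μ) {β : ℝ} (hβ : 0 ≤ β) (ε : ℝ≥0∞) {s : Set X}
    (hs : MeasurableSet s) : ε * μ (slowReturnSet S β ε ∩ s) ≤ ediam s ^ β := by
  refine ENNReal.mul_le_of_forall_natCast_mul_le fun N hN => ?_
  have hsub : slowReturnSet S β ε ∩ s ⊆ s \ ⋃ k ∈ Finset.Icc 1 N, S^[k] ⁻¹' s := by
    rintro x ⟨hx, hxs⟩
    refine ⟨hxs, fun hret => ?_⟩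
    obtain ⟨k, hk, hks⟩ := mem_iUnion₂.1 hret
    obtain ⟨hk1, hkN⟩ := Finset.mem_Icc.1 hk
    refine (hx k hk1).not_ge ?_
    calc (k : ℝ≥0∞) * edist (S^[k] x) x ^ β ≤ N * ediam s ^ β := by
          gcongr
          exact edist_le_ediam_of_mem hks hxs
      _ ≤ ε := hN
  calc ((N : ℝ≥0∞) + 1) * μ (slowReturnSet S β ε ∩ s)
      ≤ ((N : ℝ≥0∞) + 1) * μ (s \ ⋃ k ∈ Finset.Icc 1 N, S^[k] ⁻¹' s) := by gcongr
    _ ≤ μ univ := hS.natCast_add_one_mul_measure_diff_biUnion_le hs N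
    _ = 1 := measure_univ

section Hausdorff

variable [EMetricSpace X] [BorelSpace X] [IsProbabilityMeasure μ] {β : ℝ}

theorem measure_slowReturnSet_eq_zero (hS : MeasurePreserving S μ μ) (hβ : 0 < β)
    (h0 : μH[β] (univ : Set X) = 0) {ε : ℝ≥0∞} (hε : ε ≠ 0) :
    μ (slowReturnSet S β ε) = 0 := by
  suffices ε * μ (slowReturnSet S β ε) = 0 by simpa [hε] using this
  by_contra hne
  obtain ⟨t, htc, hcov, hsum⟩ := exists_isClosed_cover_tsum_ediam_rpow_lt hβ h0 hne
  refine hsum.not_ge ?_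
  calc ε * μ (slowReturnSet S β ε) ≤ ε * ∑' n, μ (slowReturnSet S β ε ∩ t n) := by
        gcongr
        refine (measure_mono ?_).trans (measure_iUnion_le _)
        rw [← inter_iUnion]
        exact subset_inter subset_rfl ((subset_univ _).trans hcov)
    _ = ∑' n, ε * μ (slowReturnSet S β ε ∩ t n) := ENNReal.tsum_mul_left.symm
    _ ≤ ∑' n, ediam (t n) ^ β := ENNReal.tsum_le_tsum fun n =>
        hS.mul_measure_slowReturnSet_inter_le hβ.le ε (htc n).measurableSet

theorem ae_exists_ge_natCast_mul_edist_rpow_le (hS : MeasurePreserving S μ μ) (hβ : 0 < β)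
    (h0 : μH[β] (univ : Set X) = 0) {ε : ℝ≥0∞} (hε : ε ≠ 0) (m : ℕ) :
    ∀ᵐ x ∂μ, ∃ n ≥ m, (n : ℝ≥0∞) * edist (S^[n] x) x ^ β ≤ ε := by
  have hε' : ε / (m + 1) ≠ 0 := by simp [hε]
  have hnull := (hS.iterate (m + 1)).measure_slowReturnSet_eq_zero hβ h0 hε'
  filter_upwards [measure_eq_zero_iff_ae_notMem.1 hnull] with x hx
  simp only [slowReturnSet, mem_ofPred_eq, not_forall, not_lt] at hx
  obtain ⟨k, hk, hkx⟩ := hx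
  refine ⟨(m + 1) * k, by nlinarith, ?_⟩
  calc (((m + 1) * k : ℕ) : ℝ≥0∞) * edist (S^[(m + 1) * k] x) x ^ β
      = (m + 1) * (k * edist ((S^[m + 1])^[k] x) x ^ β) := by
        rw [Function.iterate_mul]; push_cast; ring
    _ ≤ (m + 1) * (ε / (m + 1)) := by gcongr
    _ = ε := ENNReal.mul_div_cancel (by positivity) (by simp)

theorem ae_frequently_natCast_mul_edist_rpow_le (hS : MeasurePreserving S μ μ) (hβ : 0 < β)
    (h0 : μH[β] (univ : Set X) = 0) :
    ∀ᵐ x ∂μ, ∀ ε : ℝ≥0∞, ε ≠ 0 →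
      ∃ᶠ n : ℕ in atTop, (n : ℝ≥0∞) * edist (S^[n] x) x ^ β ≤ ε := by
  have hae := ae_all_iff.2 fun m => ae_all_iff.2 fun j : ℕ =>
    hS.ae_exists_ge_natCast_mul_edist_rpow_le hβ h0 (ε := (j : ℝ≥0∞)⁻¹) (by simp) m
  filter_upwards [hae] with x hx ε hε
  obtain ⟨j, hj⟩ := ENNReal.exists_inv_nat_lt hε
  exact frequently_atTop.2 fun m => (hx m j).imp fun n ⟨hmn, hn⟩ => ⟨hmn, hn.trans hj.le⟩

end Hausdorff

theorem ae_frequently_rpow_mul_dist_le [MetricSpace X] [BorelSpace X] [IsProbabilityMeasure μ]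
    (hS : MeasurePreserving S μ μ) {β : ℝ} (hβ : 0 < β) (h0 : μH[β] (univ : Set X) = 0) :
    ∀ᵐ x ∂μ, ∀ ε > 0, ∃ᶠ n : ℕ in atTop, (n : ℝ) ^ (1 / β) * dist (S^[n] x) x ≤ ε := by
  filter_upwards [hS.ae_frequently_natCast_mul_edist_rpow_le hβ h0] with x hx ε hε
  refine (hx (ENNReal.ofReal (ε ^ β)) (by positivity)).mono fun n hn => ?_
  rw [edist_dist, ENNReal.ofReal_rpow_of_nonneg dist_nonneg hβ.le, ← ENNReal.ofReal_natCast,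
    ← ENNReal.ofReal_mul (by positivity), ENNReal.ofReal_le_ofReal_iff (by positivity)] at hn
  rwa [← Real.rpow_le_rpow_iff (by positivity) hε.le hβ, Real.mul_rpow (by positivity) dist_nonneg,
    ← Real.rpow_mul n.cast_nonneg, one_div_mul_cancel hβ.ne', Real.rpow_one]

end MeasureTheory.MeasurePreserving

theorem stmt_15_general {X : Type*} [MetricSpace X]
    [MeasurableSpace X] [BorelSpace X]
    (T : X → X) (μ : Measure X) [IsProbabilityMeasure μ]
    (hT : MeasurePreserving T μ μ)
    (β : ℝ) (hβ : 0 < β) (h0 : μH[β] (Set.univ : Set X) = 0) :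
    ∀ᵐ x ∂μ, liminf (fun n : ℕ => (n : ℝ) ^ (1 / β) * dist (T^[n] x) x) atTop = 0 := by
  filter_upwards [hT.ae_frequently_rpow_mul_dist_le hβ h0] with x hx
  exact liminf_eq_zero_of_frequently_le (fun n => by positivity) hx

theorem stmt_15 {X : Type*} [MetricSpace X] [TopologicalSpace.SeparableSpace X]
    [MeasurableSpace X] [BorelSpace X]
    (T : X → X) (hTm : Measurable T) (μ : Measure X) [IsProbabilityMeasure μ]
    (hT : MeasurePreserving T μ μ)
    (β : ℝ) (hβ : 0 < β) (h0 : μH[β] (Set.univ : Set X) = 0) :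
    ∀ᵐ x ∂μ, liminf (fun n : ℕ => (n : ℝ) ^ (1 / β) * dist (T^[n] x) x) atTop = 0 :=
  stmt_15_general T μ hT β hβ h0
end
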